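/- Let n ≥ 2, let β be an element of the degree-2 part of S_{n−1}, and let c and w be elements of the ℤ-span of x₁,…,x_{n−1}, viewed inside R(β). If (y + w)² = c·(y + w) in R(β), then c = β + 2w, w² = c·w, and c² = β² in S_{n−1}. -/

import Mathlib

/-!
Sending `y ↦ Y` and `xᵢ ↦ xᵢ` maps `R(β)` to `S[Y] ⧸ (Y² - βY)` (in fact isomorphically).
There, `(Y + w)² - c (Y + w) - (Y² - βY) = (β + 2w - c) Y + (w² - c w)` is a multiple of the
monic quadratic `Y² - βY` of degree at most one, hence zero. Finally `w² = c w = β w + 2 w²`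
gives `w² + β w = 0`, so `c² - β² = 4 (β w + w²) = 0`.
-/

open MvPolynomial

/-- The defining ideal `⟨x₁²,…,x_m²⟩` of `S_m = H^*((ℂP¹)^m ; ℤ)`. -/
noncomputable def sqIdeal (m : ℕ) : Ideal (MvPolynomial (Fin m) ℤ) :=
  Ideal.span (Set.range fun i : Fin m => (X i) ^ 2)

/-- The defining ideal `⟨x₁²,…,x_m², y² - βy⟩` of the cohomology ring `R(β)` of the
one-twist Bott manifold `M(β)` over `(ℂP¹)^m`, where `β = ∑ b_i x_i`; the variable indexed
by `none` is `y`. -/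
noncomputable def twistIdeal (m : ℕ) (b : Fin m → ℤ) :
    Ideal (MvPolynomial (Option (Fin m)) ℤ) :=
  Ideal.span
    ((Set.range fun i : Fin m => (X (some i) : MvPolynomial (Option (Fin m)) ℤ) ^ 2) ∪
      {X none ^ 2 - (∑ i : Fin m, C (b i) * X (some i)) * X none})

namespace Polynomial

variable {A : Type*} [CommRing A]

theorem eq_zero_of_monic_dvd_C_mul_X_add_C {p : A[X]} {a b : A} (hp : p.Monic)
    (hdeg : 1 < p.natDegree) (h : p ∣ C a * X + C b) : a = 0 ∧ b = 0 := by
  have hlinear : C a * X + C b = 0 := by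
    by_contra hne
    have hle : (C a * X + C b).natDegree ≤ 1 := by compute_degree
    exact hp.not_dvd_of_natDegree_lt hne (by omega) h
  exact ⟨by simpa using congrArg (coeff · 1) hlinear,
    by simpa using congrArg (coeff · 0) hlinear⟩

theorem eq_add_two_mul_and_sq_eq_of_mem_span {β c w : A}
    (h : (X + C w) ^ 2 - C c * (X + C w) ∈ Ideal.span {X ^ 2 - C β * X}) :
    c = β + 2 * w ∧ w ^ 2 = c * w ∧ c ^ 2 = β ^ 2 := by
  nontriviality A
  have hmonic : (X ^ 2 - C β * X : A[X]).Monic := by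
    simpa [sq, mul_sub] using monic_X.mul (monic_X_sub_C β)
  have hdeg : (X ^ 2 - C β * X : A[X]).natDegree = 2 := by compute_degree!
  have hdvd : X ^ 2 - C β * X ∣ C (β + 2 * w - c) * X + C (w ^ 2 - c * w) := by
    have hdiff : C (β + 2 * w - c) * X + C (w ^ 2 - c * w) =
        (X + C w) ^ 2 - C c * (X + C w) - (X ^ 2 - C β * X) := by
      simp only [map_sub, map_add, map_mul, map_pow, map_ofNat]
      ring
    rw [hdiff]
    exact dvd_sub (Ideal.mem_span_singleton.mp h) dvd_rfl
  obtain ⟨h1, h0⟩ := eq_zero_of_monic_dvd_C_mul_X_add_C hmonic (by omega) hdvd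
  have hc : c = β + 2 * w := by linear_combination -h1
  have hw : w ^ 2 = c * w := by linear_combination h0
  exact ⟨hc, hw, by linear_combination (c + β - 2 * w) * hc - 4 * hw⟩

end Polynomial

noncomputable def twistEval (m : ℕ) :
    MvPolynomial (Option (Fin m)) ℤ →ₐ[ℤ] Polynomial (MvPolynomial (Fin m) ℤ ⧸ sqIdeal m) :=
  aeval fun o =>
    Option.elim o Polynomial.X fun i => Polynomial.C (Ideal.Quotient.mk (sqIdeal m) (X i))

namespace twistEval

variable (m : ℕ)

@[simp]
theorem X_none : twistEval m (X none) = Polynomial.X := aeval_X _ _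

@[simp]
theorem X_some (i : Fin m) :
    twistEval m (X (some i)) = Polynomial.C (Ideal.Quotient.mk (sqIdeal m) (X i)) :=
  aeval_X _ _

@[simp]
theorem sum_C_mul_X_some (a : Fin m → ℤ) :
    twistEval m (∑ i, C (a i) * X (some i)) =
      Polynomial.C (Ideal.Quotient.mk (sqIdeal m) (∑ i, C (a i) * X i)) := by
  simp [map_sum, twistEval]

theorem twistIdeal_le_comap (b : Fin m → ℤ) :
    twistIdeal m b ≤ (Ideal.span {Polynomial.X ^ 2 - Polynomial.C
      (Ideal.Quotient.mk (sqIdeal m) (∑ i, C (b i) * X i)) * Polynomial.X}).comap (twistEval m) := by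
  rw [twistIdeal, Ideal.span_le]
  rintro r (⟨i, rfl⟩ | rfl)
  · have hsq : Ideal.Quotient.mk (sqIdeal m) (X i ^ 2) = 0 :=
      Ideal.Quotient.eq_zero_iff_mem.mpr (Ideal.subset_span ⟨i, rfl⟩)
    refine Ideal.mem_comap.mpr ?_
    rw [map_pow, X_some, ← map_pow, ← map_pow, hsq, map_zero]
    exact Ideal.zero_mem _
  · exact Ideal.mem_comap.mpr (Ideal.subset_span (by simp))

theorem sub_mem_span_of_mk_eq (b : Fin m → ℤ) {p q : MvPolynomial (Option (Fin m)) ℤ}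
    (h : Ideal.Quotient.mk (twistIdeal m b) p = Ideal.Quotient.mk (twistIdeal m b) q) :
    twistEval m p - twistEval m q ∈ Ideal.span {Polynomial.X ^ 2 -
      Polynomial.C (Ideal.Quotient.mk (sqIdeal m) (∑ i, C (b i) * X i)) * Polynomial.X} := by
  rw [← map_sub]
  exact twistIdeal_le_comap m b (Ideal.Quotient.eq.mp h)

end twistEval

theorem stmt17_general (n : ℕ) (b c w : Fin (n - 1) → ℤ)
    (h : (Ideal.Quotient.mk (twistIdeal (n - 1) b)
        (X none + ∑ i : Fin (n - 1), C (w i) * X (some i))) ^ 2 =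
      Ideal.Quotient.mk (twistIdeal (n - 1) b)
        ((∑ i : Fin (n - 1), C (c i) * X (some i)) *
          (X none + ∑ i : Fin (n - 1), C (w i) * X (some i)))) :
    Ideal.Quotient.mk (sqIdeal (n - 1)) (∑ i : Fin (n - 1), C (c i) * X i) =
        Ideal.Quotient.mk (sqIdeal (n - 1)) (∑ i : Fin (n - 1), C (b i) * X i) +
          2 * Ideal.Quotient.mk (sqIdeal (n - 1)) (∑ i : Fin (n - 1), C (w i) * X i) ∧
      (Ideal.Quotient.mk (sqIdeal (n - 1)) (∑ i : Fin (n - 1), C (w i) * X i)) ^ 2 =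
        Ideal.Quotient.mk (sqIdeal (n - 1)) (∑ i : Fin (n - 1), C (c i) * X i) *
          Ideal.Quotient.mk (sqIdeal (n - 1)) (∑ i : Fin (n - 1), C (w i) * X i) ∧
      (Ideal.Quotient.mk (sqIdeal (n - 1)) (∑ i : Fin (n - 1), C (c i) * X i)) ^ 2 =
        (Ideal.Quotient.mk (sqIdeal (n - 1)) (∑ i : Fin (n - 1), C (b i) * X i)) ^ 2 := by
  rw [← map_pow] at h
  have hmem := twistEval.sub_mem_span_of_mk_eq (n - 1) b h
  simp only [map_pow, map_mul, map_add, twistEval.X_none, twistEval.sum_C_mul_X_some] at hmem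
  exact Polynomial.eq_add_two_mul_and_sq_eq_of_mem_span hmem

/-- If `c = ∑ c_i x_i` and `w = ∑ w_i x_i` lie in the ℤ-span of the `x_i` and
`(y + w)² = c (y + w)` holds in `R(β)`, then `c = β + 2w`, `w² = c w`, and `c² = β²`
(the latter identities holding in `S_{n-1}`). -/
theorem stmt17 (n : ℕ) (hn : 2 ≤ n) (b c w : Fin (n - 1) → ℤ)
    (h : (Ideal.Quotient.mk (twistIdeal (n - 1) b)
        (X none + ∑ i : Fin (n - 1), C (w i) * X (some i))) ^ 2 =
      Ideal.Quotient.mk (twistIdeal (n - 1) b)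
        ((∑ i : Fin (n - 1), C (c i) * X (some i)) *
          (X none + ∑ i : Fin (n - 1), C (w i) * X (some i)))) :
    Ideal.Quotient.mk (sqIdeal (n - 1)) (∑ i : Fin (n - 1), C (c i) * X i) =
        Ideal.Quotient.mk (sqIdeal (n - 1)) (∑ i : Fin (n - 1), C (b i) * X i) +
          2 * Ideal.Quotient.mk (sqIdeal (n - 1)) (∑ i : Fin (n - 1), C (w i) * X i) ∧
      (Ideal.Quotient.mk (sqIdeal (n - 1)) (∑ i : Fin (n - 1), C (w i) * X i)) ^ 2 =
        Ideal.Quotient.mk (sqIdeal (n - 1)) (∑ i : Fin (n - 1), C (c i) * X i) *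
          Ideal.Quotient.mk (sqIdeal (n - 1)) (∑ i : Fin (n - 1), C (w i) * X i) ∧
      (Ideal.Quotient.mk (sqIdeal (n - 1)) (∑ i : Fin (n - 1), C (c i) * X i)) ^ 2 =
        (Ideal.Quotient.mk (sqIdeal (n - 1)) (∑ i : Fin (n - 1), C (b i) * X i)) ^ 2 :=
  stmt17_general n b c w h
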